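/- arXiv:2306.03532 — 3 statements merged into one kernel-verified Lean document; each statement's English description precedes it below -/
import Mathlib

section
/- Let S be a finite nonempty set and E a nonempty finite family of subsets of S with ∅ ∉ E. Let M be the family of all A ⊆ E such that ⋂A ≠ ∅ and A is maximal with this property (any strict superset A' ⊆ E of A has ⋂A' = ∅). Then the set M := ⋃{⋂A : A ∈ M} is a dense open set in the topology τ_E generated by E (restricted to ⋃E), and M ⊆ T for every dense open set T in τ_E. -/
/-- `T` is an open set of the topology on `⋃₀ F` generated by the subbasis `F`. -/
def IsOpenIn {V : Type*} (F : Set (Set V)) (T : Set V) : Prop :=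
  (TopologicalSpace.generateFrom F).IsOpen T ∧ T ⊆ ⋃₀ F

/-- `T` is dense in `⋃₀ F` w.r.t. the topology generated by `F`. -/
def DenseIn {V : Type*} (F : Set (Set V)) (T : Set V) : Prop :=
  ∀ U, IsOpenIn F U → U.Nonempty → (T ∩ U).Nonempty

/-- `A` is a subfamily of `E` with the maximal finite intersection property:
`⋂ A ≠ ∅` and any strictly larger subfamily of `E` has empty intersection. -/
def MaxFIP {V : Type*} (E : Set (Set V)) (A : Set (Set V)) : Prop :=
  A ⊆ E ∧ (⋂₀ A).Nonempty ∧ ∀ A', A ⊂ A' → A' ⊆ E → ⋂₀ A' = ∅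

open TopologicalSpace

lemma maxFIP_nonempty {V : Type*} {E A : Set (Set V)} (hne : E.Nonempty) (hemp : ∅ ∉ E)
    (hA : MaxFIP E A) : A.Nonempty := by
  rcases Set.eq_empty_or_nonempty A with rfl | h
  · exfalso
    obtain ⟨e, he⟩ := hne
    have := hA.2.2 {e} (Set.empty_ssubset.2 (Set.singleton_nonempty e))
      (Set.singleton_subset_iff.2 he)
    rw [Set.sInter_singleton] at this
    exact hemp (this ▸ he)
  · exact h

lemma maxFIP_isOpenIn {V : Type*} [Fintype V] {E A : Set (Set V)} (hne : E.Nonempty)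
    (hemp : ∅ ∉ E) (hA : MaxFIP E A) : IsOpenIn E (⋂₀ A) := by
  letI := generateFrom E
  constructor
  · exact Set.Finite.isOpen_sInter (Set.toFinite A)
      (fun t ht => TopologicalSpace.GenerateOpen.basic t (hA.1 ht))
  · obtain ⟨a, ha⟩ := maxFIP_nonempty hne hemp hA
    intro x hx
    exact ⟨a, hA.1 ha, hx a ha⟩

lemma exists_maxFIP_superset {V : Type*} [Fintype V] {E A : Set (Set V)} (hAE : A ⊆ E)
    (hAne : (⋂₀ A).Nonempty) : ∃ B, MaxFIP E B ∧ A ⊆ B := by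
  obtain ⟨B, hBmem, hBmax⟩ := Set.Finite.exists_maximalFor id
    {B | A ⊆ B ∧ B ⊆ E ∧ (⋂₀ B).Nonempty} (Set.toFinite _) ⟨A, subset_rfl, hAE, hAne⟩
  obtain ⟨hAB, hBE, hBne⟩ := hBmem
  refine ⟨B, ⟨hBE, hBne, ?_⟩, hAB⟩
  intro A' hBA' hA'E
  by_contra h
  exact hBA'.2 (hBmax ⟨hAB.trans hBA'.subset, hA'E,
    Set.nonempty_iff_ne_empty.2 h⟩ hBA'.subset)

lemma exists_basic_subset {V : Type*} {E : Set (Set V)} {U : Set V}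
    (hU : (generateFrom E).IsOpen U) {u : V} (hu : u ∈ U) :
    ∃ F : Set (Set V), F ⊆ E ∧ u ∈ ⋂₀ F ∧ ⋂₀ F ⊆ U := by
  letI := generateFrom E
  have basis := isTopologicalBasis_of_subbasis (s := E) rfl
  obtain ⟨B, hB, huB, hBU⟩ := basis.exists_subset_of_mem_open hu hU
  obtain ⟨F, ⟨_, hFE⟩, rfl⟩ := hB
  exact ⟨F, hFE, huB, hBU⟩

/-- the union `M` of the intersections of all maximal families with
nonempty intersection is a dense open set of the topology generated by `E`, and
it is contained in every dense open set (it is the minimum dense open set). -/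
theorem min_dense_open_eq_union_maxFIP {V : Type*} [Fintype V] [Nonempty V]
    (E : Set (Set V)) (hne : E.Nonempty) (hemp : ∅ ∉ E) :
    (IsOpenIn E (⋃ A ∈ {A | MaxFIP E A}, ⋂₀ A) ∧
      DenseIn E (⋃ A ∈ {A | MaxFIP E A}, ⋂₀ A)) ∧
    ∀ T, IsOpenIn E T → DenseIn E T → (⋃ A ∈ {A | MaxFIP E A}, ⋂₀ A) ⊆ T := by
  letI := generateFrom E
  refine ⟨⟨⟨?_, ?_⟩, ?_⟩, ?_⟩
  · exact isOpen_biUnion fun A hA => (maxFIP_isOpenIn hne hemp hA).1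
  · intro x hx
    simp only [Set.mem_iUnion] at hx
    obtain ⟨A, hA, hxA⟩ := hx
    exact (maxFIP_isOpenIn hne hemp hA).2 hxA
  · -- density
    rintro U hU ⟨u, hu⟩
    obtain ⟨F, hFE, huF, hFU⟩ := exists_basic_subset hU.1 hu
    set A : Set (Set V) := {e | e ∈ E ∧ u ∈ e} with hAdef
    have hAE : A ⊆ E := fun e he => he.1
    have hFA : F ⊆ A := fun f hf => ⟨hFE hf, huF f hf⟩
    have hAne : (⋂₀ A).Nonempty := ⟨u, fun e he => he.2⟩
    obtain ⟨B, hB, hAB⟩ := exists_maxFIP_superset hAE hAne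
    obtain ⟨v, hv⟩ := hB.2.1
    refine ⟨v, ?_, hFU fun f hf => hv f (hAB (hFA hf))⟩
    exact Set.mem_biUnion hB hv
  · -- minimality
    intro T hT hTd x hx
    simp only [Set.mem_iUnion] at hx
    obtain ⟨A, hA, hxA⟩ := hx
    obtain ⟨t, htT, htA⟩ := hTd (⋂₀ A) (maxFIP_isOpenIn hne hemp hA) hA.2.1
    obtain ⟨F, hFE, htF, hFT⟩ := exists_basic_subset hT.1 htT
    by_cases hFA : F ⊆ A
    · exact hFT fun f hf => hxA f (hFA hf)
    · exfalso
      have hss : A ⊂ A ∪ F := by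
        refine ⟨Set.subset_union_left, fun h => hFA fun f hf => h (Set.mem_union_right A hf)⟩
      have hempty := hA.2.2 (A ∪ F) hss (Set.union_subset hA.1 hFE)
      have : t ∈ ⋂₀ (A ∪ F) := fun s hs => hs.elim (htA s) (htF s)
      rw [hempty] at this
      exact this
end

section
/- If m : 2^S → [0,1] is a basic probability assignment over a finite set S, then the function Bel(P) = ∑_{A ⊆ P} m(A) satisfies Bel(∅) = 0, Bel(S) = 1, and the n-monotonicity inequality Bel(A_1 ∪ ... ∪ A_n) ≥ ∑_{∅ ≠ I ⊆ {1,...,n}} (-1)^{|I|+1} Bel(⋂_{i∈I} A_i) for all n ≥ 1 and all A_1,...,A_n ⊆ S; that is, Bel is a belief function. -/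
/-!
`Bel P` is the `m`-weighted count of the elements `B ≤ P`. For a fixed `B`, inclusion–exclusion
for the indicators of the down-sets `Iic (A i)` turns the alternating sum over `I` into the
indicator of `∃ i, B ≤ A i`, which is at most that of `B ≤ ⨆ i, A i`; summing against `m ≥ 0`
gives total monotonicity.
-/

open scoped Classical

open Finset

section

variable {α : Type*} [CompleteLattice α] [Fintype α]

noncomputable def beliefOfMass (m : α → ℝ) (P : α) : ℝ := ∑ B, if B ≤ P then m B else 0

lemma beliefOfMass_eq_sum_indicator (m : α → ℝ) (P : α) :
    beliefOfMass m P = ∑ B, (Set.Iic P).indicator m B := rfl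

lemma beliefOfMass_bot (m : α → ℝ) : beliefOfMass m ⊥ = m ⊥ := by
  simp [beliefOfMass]

lemma beliefOfMass_top (m : α → ℝ) : beliefOfMass m ⊤ = ∑ B, m B := by
  simp [beliefOfMass]

lemma sum_powerset_neg_one_pow_mul_beliefOfMass_iInf_le {ι : Type*} {m : α → ℝ} (hm : 0 ≤ m)
    (s : Finset ι) (A : ι → α) :
    ∑ t ∈ s.powerset with t.Nonempty, (-1 : ℝ) ^ (#t + 1) * beliefOfMass m (⨅ i ∈ t, A i) ≤
      beliefOfMass m (⨆ i ∈ s, A i) := by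
  have Iic_iInf (t : Finset ι) : Set.Iic (⨅ i ∈ t, A i) = ⋂ i ∈ t, Set.Iic (A i) := by
    ext; simp
  calc ∑ t ∈ s.powerset with t.Nonempty, (-1 : ℝ) ^ (#t + 1) * beliefOfMass m (⨅ i ∈ t, A i)
      = ∑ B, (⋃ i ∈ s, Set.Iic (A i)).indicator m B := by
        simp only [beliefOfMass_eq_sum_indicator, Iic_iInf, mul_sum]
        rw [sum_comm]
        refine sum_congr rfl fun B _ => ?_
        simpa using (indicator_biUnion_eq_sum_powerset s (fun i => Set.Iic (A i)) m B).symm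
    _ ≤ ∑ B, (Set.Iic (⨆ i ∈ s, A i)).indicator m B := by
        refine sum_le_sum fun B _ => Set.indicator_le_indicator_of_subset ?_ hm B
        exact Set.iUnion₂_subset fun i hi => Set.Iic_subset_Iic.2 (le_biSup A hi)
    _ = beliefOfMass m (⨆ i ∈ s, A i) := rfl

end

/-- if `m` is a basic probability assignment over a finite set `S`
(`m ∅ = 0`, values in `[0,1]`, total mass `1`), then `Bel(P) = ∑_{A ⊆ P} m A`
satisfies `Bel ∅ = 0`, `Bel S = 1`, and the n-monotonicity inequality
`Bel(⋃ A_i) ≥ ∑_{∅ ≠ I ⊆ {1..n}} (-1)^{|I|+1} Bel(⋂_{i ∈ I} A_i)`;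
that is, `Bel` is a belief function. -/
theorem bpa_gives_belief_function {V : Type*} [Fintype V]
    (m : Set V → ℝ) (hm0 : m ∅ = 0) (hm01 : ∀ A, m A ∈ Set.Icc (0 : ℝ) 1)
    (hmsum : ∑ A : Set V, m A = 1)
    (Bel : Set V → ℝ) (hBel : ∀ P, Bel P = ∑ A : Set V, if A ⊆ P then m A else 0) :
    Bel ∅ = 0 ∧ Bel Set.univ = 1 ∧
    ∀ n : ℕ, 1 ≤ n → ∀ A : Fin n → Set V,
      Bel (⋃ i, A i) ≥
        ∑ I ∈ Finset.univ.powerset.filter (fun I : Finset (Fin n) => I ≠ ∅),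
          (-1 : ℝ) ^ (I.card + 1) * Bel (⋂ i ∈ I, A i) := by
  obtain rfl : Bel = beliefOfMass m := funext hBel
  refine ⟨beliefOfMass_bot m ▸ hm0, beliefOfMass_top m ▸ hmsum, fun n _ A => ?_⟩
  have hm : 0 ≤ m := fun B => (hm01 B).1
  simpa [nonempty_iff_ne_empty] using sum_powerset_neg_one_pow_mul_beliefOfMass_iInf_le hm univ A
end

section
/- Let S be finite nonempty and E^Q = {(E_1,p_1),...,(E_k,p_k)} with p_i ∈ (0,1) and the E_i pairwise distinct, nonempty, proper subsets of S. Assume ∑_{B ⊆ E : ⋂B = ∅} δ(B) < 1 (Dempster combinability), where δ(B) = ∏_{E_i∈B} p_i ∏_{E_i∉B}(1-p_i) and by convention ⋂∅ = S. Let m_i be the simple support function with m_i(E_i) = p_i, m_i(S) = 1 - p_i, and let m = m_1 ⊕ ... ⊕ m_k be their Dempster combination. Then for every nonempty A ⊆ S, m(A) = (∑_{B : ⋂B = A} δ(B)) / (∑_{B : ⋂B ≠ ∅} δ(B)). -/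
open scoped Classical

/-- The mass function δ on subsets of the evidence index set. -/
noncomputable def evidMass {k : ℕ} (p : Fin k → ℝ) (B : Finset (Fin k)) : ℝ :=
  (∏ i ∈ B, p i) * ∏ i ∈ Bᶜ, (1 - p i)

/-- Dempster's rule of combination of two basic probability assignments. -/
noncomputable def dempster {V : Type*} [Fintype V] (m1 m2 : Set V → ℝ) : Set V → ℝ :=
  fun C =>
    if C = ∅ then 0
    else
      (∑ A : Set V, ∑ B : Set V, if A ∩ B = C then m1 A * m2 B else 0) /
      (1 - ∑ A : Set V, ∑ B : Set V, if A ∩ B = ∅ then m1 A * m2 B else 0)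

/-- The simple support function assigning mass `p` to `E` and `1 - p` to `S`. -/
noncomputable def ssf {V : Type*} (E : Set V) (p : ℝ) : Set V → ℝ :=
  fun A => if A = E then p else if A = Set.univ then 1 - p else 0

/-- The vacuous basic probability assignment (all mass on `S`), the identity
element for Dempster's rule. -/
noncomputable def vacuous {V : Type*} : Set V → ℝ :=
  fun A => if A = Set.univ then 1 else 0

/-- The Dempster combination `m₁ ⊕ ⋯ ⊕ m_k` of the simple support functions
`m_i(E_i) = p_i`, `m_i(S) = 1 - p_i`. -/
noncomputable def dempsterComb {V : Type*} [Fintype V] {k : ℕ}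
    (E : Fin k → Set V) (p : Fin k → ℝ) : Set V → ℝ :=
  (List.ofFn fun i => ssf (E i) (p i)).foldl dempster vacuous

/-! ### Auxiliary machinery -/

def embS (n : ℕ) : Fin n ↪ Fin (n+1) := ⟨Fin.castSucc, Fin.castSucc_injective n⟩

lemma last_not_mem_map {n : ℕ} (B : Finset (Fin n)) : Fin.last n ∉ B.map (embS n) := by
  simp [embS, fun j : Fin n => (Fin.castSucc_lt_last j).ne]

lemma biInter_map {V : Type*} {n : ℕ} (B : Finset (Fin n)) (E : Fin (n+1) → Set V) :
    (⋂ i ∈ B.map (embS n), E i) = ⋂ j ∈ B, E j.castSucc := by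
  ext x; simp [embS]

lemma compl_map {n : ℕ} (B : Finset (Fin n)) :
    (B.map (embS n))ᶜ = insert (Fin.last n) (Bᶜ.map (embS n)) := by
  ext i
  induction i using Fin.lastCases with
  | last => simp [embS, fun j : Fin n => (Fin.castSucc_lt_last j).ne]
  | cast j => simp [embS, (Fin.castSucc_lt_last j).ne, (Fin.castSucc_injective n).eq_iff]

lemma compl_insert_map {n : ℕ} (B : Finset (Fin n)) :
    (insert (Fin.last n) (B.map (embS n)))ᶜ = Bᶜ.map (embS n) := by
  ext i
  induction i using Fin.lastCases with
  | last => simp [embS, fun j : Fin n => (Fin.castSucc_lt_last j).ne]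
  | cast j => simp [embS, (Fin.castSucc_lt_last j).ne, (Fin.castSucc_injective n).eq_iff]

noncomputable def myFinSuccEquiv (n : ℕ) : Finset (Fin n) × Bool ≃ Finset (Fin (n+1)) where
  toFun x := if x.2 then insert (Fin.last n) (x.1.map (embS n)) else x.1.map (embS n)
  invFun C := (Finset.univ.filter (fun j => j.castSucc ∈ C), Fin.last n ∈ C)
  left_inv := by
    rintro ⟨B, b⟩
    have hmem : ∀ j : Fin n, j.castSucc ∈ B.map (embS n) ↔ j ∈ B := by
      intro j; simp [embS, (Fin.castSucc_injective n).eq_iff]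
    cases b <;>
      simp_all [Finset.ext_iff, embS, fun j : Fin n => (Fin.castSucc_lt_last j).ne]
  right_inv := by
    intro C
    by_cases h : Fin.last n ∈ C <;>
    · simp only [h, if_true, if_false]
      ext i
      induction i using Fin.lastCases with
      | last => simp [h, embS, fun j : Fin n => (Fin.castSucc_lt_last j).ne]
      | cast j => simp [embS, (Fin.castSucc_injective n).eq_iff, (Fin.castSucc_lt_last j).ne]

lemma sum_finset_fin_succ {M : Type*} [AddCommMonoid M] {n : ℕ} (f : Finset (Fin (n+1)) → M) :
    ∑ B : Finset (Fin (n+1)), f B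
      = (∑ B : Finset (Fin n), f (B.map (embS n)))
        + ∑ B : Finset (Fin n), f (insert (Fin.last n) (B.map (embS n))) := by
  rw [← Equiv.sum_comp (myFinSuccEquiv n) f, Fintype.sum_prod_type]
  simp only [myFinSuccEquiv, Equiv.coe_fn_mk, Fintype.sum_bool, Bool.false_eq_true,
    if_true, if_false]
  rw [Finset.sum_add_distrib, add_comm]

lemma evidMass_pos {k : ℕ} {p : Fin k → ℝ} (hp : ∀ i, p i ∈ Set.Ioo (0:ℝ) 1)
    (B : Finset (Fin k)) : 0 < evidMass p B :=
  mul_pos (Finset.prod_pos fun i _ => (hp i).1)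
    (Finset.prod_pos fun i _ => by linarith [(hp i).2])

lemma evidMass_total {k : ℕ} (p : Fin k → ℝ) : ∑ B : Finset (Fin k), evidMass p B = 1 := by
  have h := Finset.prod_add p (fun i => 1 - p i) Finset.univ
  simp only [Finset.powerset_univ] at h
  have h2 : ∀ i : Fin k, p i + (1 - p i) = 1 := fun i => by ring
  simp only [h2, Finset.prod_const_one] at h
  rw [← h.symm]
  exact Finset.sum_congr rfl fun B _ => by rw [evidMass, Finset.compl_eq_univ_sdiff]

lemma evidMass_map {n : ℕ} (p : Fin (n+1) → ℝ) (B : Finset (Fin n)) :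
    evidMass p (B.map (embS n))
      = (1 - p (Fin.last n)) * evidMass (fun j => p j.castSucc) B := by
  rw [evidMass, evidMass, Finset.prod_map, compl_map,
    Finset.prod_insert (last_not_mem_map _), Finset.prod_map]
  simp only [embS, Function.Embedding.coeFn_mk]
  ring

lemma evidMass_insert_map {n : ℕ} (p : Fin (n+1) → ℝ) (B : Finset (Fin n)) :
    evidMass p (insert (Fin.last n) (B.map (embS n)))
      = p (Fin.last n) * evidMass (fun j => p j.castSucc) B := by
  rw [evidMass, evidMass, Finset.prod_insert (last_not_mem_map _), Finset.prod_map,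
    compl_insert_map, Finset.prod_map]
  simp only [embS, Function.Embedding.coeFn_mk]
  ring

lemma mu_succ {V : Type*} {k : ℕ} (E : Fin (k+1) → Set V) (p : Fin (k+1) → ℝ) (C : Set V) :
    (∑ B : Finset (Fin (k+1)), if (⋂ i ∈ B, E i) = C then evidMass p B else 0)
      = p (Fin.last k) *
          (∑ B : Finset (Fin k),
            if ((⋂ j ∈ B, E j.castSucc) ∩ E (Fin.last k)) = C
            then evidMass (fun j => p j.castSucc) B else 0)
        + (1 - p (Fin.last k)) *
          (∑ B : Finset (Fin k),
            if (⋂ j ∈ B, E j.castSucc) = C then evidMass (fun j => p j.castSucc) B else 0) := by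
  rw [sum_finset_fin_succ, Finset.mul_sum, Finset.mul_sum, add_comm]
  congr 1
  · refine Finset.sum_congr rfl fun B _ => ?_
    rw [Finset.set_biInter_insert, biInter_map, evidMass_insert_map, Set.inter_comm,
      mul_ite, mul_zero]
  · refine Finset.sum_congr rfl fun B _ => ?_
    rw [biInter_map, evidMass_map, mul_ite, mul_zero]

lemma N_eq_one_sub {V : Type*} {k : ℕ} (E : Fin k → Set V) (p : Fin k → ℝ) :
    (∑ B : Finset (Fin k), if (⋂ i ∈ B, E i) ≠ ∅ then evidMass p B else 0)
      = 1 - ∑ B : Finset (Fin k), if (⋂ i ∈ B, E i) = ∅ then evidMass p B else 0 := by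
  rw [eq_sub_iff_add_eq, ← Finset.sum_add_distrib, ← evidMass_total p]
  exact Finset.sum_congr rfl fun B _ => by
    by_cases h : (⋂ i ∈ B, E i) = ∅ <;> simp [h]

lemma N_pos {V : Type*} [Nonempty V] {k : ℕ} (E : Fin k → Set V) {p : Fin k → ℝ}
    (hp : ∀ i, p i ∈ Set.Ioo (0:ℝ) 1) :
    0 < ∑ B : Finset (Fin k), if (⋂ i ∈ B, E i) ≠ ∅ then evidMass p B else 0 := by
  refine Finset.sum_pos' (fun B _ => ?_) ⟨∅, Finset.mem_univ _, ?_⟩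
  · by_cases h : (⋂ i ∈ B, E i) ≠ ∅ <;> simp [h, (evidMass_pos hp B).le]
  · have h : (⋂ i ∈ (∅ : Finset (Fin k)), E i) = Set.univ := by simp
    rw [h, if_pos (Ne.symm Set.empty_ne_univ)]
    exact evidMass_pos hp ∅

lemma sum_ssf_inner {V : Type*} [Fintype V] (m : Set V → ℝ) {Ek : Set V}
    (hEk : Ek ≠ Set.univ) (pk : ℝ) (A C : Set V) :
    (∑ B : Set V, if A ∩ B = C then m A * ssf Ek pk B else 0)
      = (if A ∩ Ek = C then m A * pk else 0) + (if A = C then m A * (1 - pk) else 0) := by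
  rw [← Finset.sum_subset (Finset.subset_univ ({Ek, Set.univ} : Finset (Set V)))
    (fun B _ hB => ?_)]
  · rw [Finset.sum_pair hEk]
    have h1 : ssf Ek pk Ek = pk := by simp [ssf]
    have h2 : ssf Ek pk Set.univ = 1 - pk := by simp [ssf, Ne.symm hEk]
    rw [h1, h2, Set.inter_univ]
  · simp only [Finset.mem_insert, Finset.mem_singleton, not_or] at hB
    simp [ssf, hB.1, hB.2]

/-- The key induction: the Dempster combination of simple support functions is
the normalized product measure. -/
lemma dempsterComb_key {V : Type*} [Fintype V] [Nonempty V] :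
    ∀ (k : ℕ) (E : Fin k → Set V) (p : Fin k → ℝ),
      (∀ i, E i ≠ Set.univ) → (∀ i, p i ∈ Set.Ioo (0:ℝ) 1) →
      dempsterComb E p ∅ = 0 ∧
      ∀ A : Set V, A ≠ ∅ →
        dempsterComb E p A =
          (∑ B : Finset (Fin k), if (⋂ i ∈ B, E i) = A then evidMass p B else 0) /
          (∑ B : Finset (Fin k), if (⋂ i ∈ B, E i) ≠ ∅ then evidMass p B else 0) := by
  intro k
  induction k with
  | zero =>
    intro E p _ _
    have hcomb : dempsterComb E p = vacuous := by
      unfold dempsterComb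
      rw [List.ofFn_zero]
      rfl
    constructor
    · rw [hcomb]; simp [vacuous, Set.empty_ne_univ]
    · intro A hA
      rw [hcomb]
      have hsum1 : ∀ f : Finset (Fin 0) → ℝ, ∑ B : Finset (Fin 0), f B = f ∅ := by
        intro f; rw [Finset.univ_unique, Finset.sum_singleton]; rfl
      rw [hsum1, hsum1]
      have hm : evidMass p ∅ = 1 := by simp [evidMass]
      have hI : (⋂ i ∈ (∅ : Finset (Fin 0)), E i) = Set.univ := by simp
      rw [hI, hm, if_pos (Ne.symm Set.empty_ne_univ)]
      by_cases h : A = Set.univ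
      · simp [vacuous, h]
      · rw [if_neg (fun hh => h hh.symm)]
        simp [vacuous, h]
  | succ k IH =>
    intro E p hproper hp
    set Ek := E (Fin.last k) with hEk
    set pk := p (Fin.last k) with hpk
    set E' := fun j : Fin k => E j.castSucc with hE'
    set p' := fun j : Fin k => p j.castSucc with hp'
    obtain ⟨hm0, hm⟩ := IH E' p' (fun j => hproper _) (fun j => hp _)
    set m := dempsterComb E' p' with hmdef
    have hfold : dempsterComb E p = dempster m (ssf Ek pk) := by
      unfold dempsterComb
      rw [List.ofFn_succ', List.concat_eq_append, List.foldl_concat]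
      rfl
    -- notation
    set μ' : Set V → ℝ := fun C =>
      ∑ B : Finset (Fin k), if (⋂ i ∈ B, E' i) = C then evidMass p' B else 0 with hμ'
    set T : Set V → ℝ := fun C =>
      ∑ B : Finset (Fin k), if ((⋂ i ∈ B, E' i) ∩ Ek) = C then evidMass p' B else 0 with hT
    set N' : ℝ :=
      ∑ B : Finset (Fin k), if (⋂ i ∈ B, E' i) ≠ ∅ then evidMass p' B else 0 with hN'
    have hN'pos : 0 < N' := N_pos E' (fun j => hp _)
    have hN'ne : N' ≠ 0 := ne_of_gt hN'pos
    have hmm : ∀ A : Set V, A ≠ ∅ → m A = μ' A / N' := by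
      intro A hA
      rw [hμ', hN']
      exact hm A hA
    -- μ at level k+1
    have hmusucc : ∀ C : Set V,
        (∑ B : Finset (Fin (k+1)), if (⋂ i ∈ B, E i) = C then evidMass p B else 0)
          = pk * T C + (1 - pk) * μ' C := by
      intro C
      rw [hT, hμ']
      exact mu_succ E p C
    have hNsucc :
        (∑ B : Finset (Fin (k+1)), if (⋂ i ∈ B, E i) ≠ ∅ then evidMass p B else 0)
          = N' - pk * T ∅ + pk * μ' ∅ := by
      rw [N_eq_one_sub, hmusucc ∅, hN', N_eq_one_sub]
      ring
    have hNpos : (0:ℝ) < N' - pk * T ∅ + pk * μ' ∅ := hNsucc ▸ N_pos E hp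
    have hNne : N' - pk * T ∅ + pk * μ' ∅ ≠ 0 := ne_of_gt hNpos
    -- pulling an `if` out of a sum
    have pull : ∀ (c : Prop) [Decidable c] (f : Finset (Fin k) → ℝ),
        (if c then (∑ B : Finset (Fin k), f B) else 0)
          = ∑ B : Finset (Fin k), (if c then f B else 0) := by
      intro c _ f
      split_ifs <;> simp
    -- rewrite T via the double sum
    have hTswap : ∀ C : Set V,
        (∑ A : Set V, if A ∩ Ek = C then μ' A else 0) = T C := by
      intro C
      calc (∑ A : Set V, if A ∩ Ek = C then μ' A else 0)
          = ∑ A : Set V, ∑ B : Finset (Fin k),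
              (if A ∩ Ek = C then (if (⋂ i ∈ B, E' i) = A then evidMass p' B else 0)
               else 0) := by
            refine Finset.sum_congr rfl fun A _ => ?_
            rw [hμ']
            exact pull _ _
        _ = ∑ A : Set V, ∑ B : Finset (Fin k),
              (if (⋂ i ∈ B, E' i) = A then (if A ∩ Ek = C then evidMass p' B else 0)
               else 0) := by
            refine Finset.sum_congr rfl fun A _ => Finset.sum_congr rfl fun B _ => ?_
            split_ifs <;> rfl
        _ = ∑ B : Finset (Fin k), ∑ A : Set V,
              (if (⋂ i ∈ B, E' i) = A then (if A ∩ Ek = C then evidMass p' B else 0)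
               else 0) := Finset.sum_comm
        _ = T C := by
            rw [hT]
            refine Finset.sum_congr rfl fun B _ => ?_
            rw [Finset.sum_ite_eq Finset.univ (⋂ i ∈ B, E' i)
              (fun A => if A ∩ Ek = C then evidMass p' B else 0),
              if_pos (Finset.mem_univ _)]
    -- numerator of Dempster's rule
    have hnum : ∀ C : Set V, C ≠ ∅ →
        (∑ A : Set V, ∑ B : Set V, if A ∩ B = C then m A * ssf Ek pk B else 0)
          = (pk * T C + (1 - pk) * μ' C) / N' := by
      intro C hC
      rw [Finset.sum_congr rfl fun A _ => sum_ssf_inner m (hproper (Fin.last k)) pk A C,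
        Finset.sum_add_distrib]
      have h2 : (∑ A : Set V, if A = C then m A * (1 - pk) else 0) = m C * (1 - pk) := by
        rw [Finset.sum_ite_eq' Finset.univ C (fun A => m A * (1 - pk)),
          if_pos (Finset.mem_univ _)]
      have h1 : (∑ A : Set V, if A ∩ Ek = C then m A * pk else 0)
          = pk * (T C / N') := by
        have e : ∀ A : Set V, (if A ∩ Ek = C then m A * pk else 0)
            = pk * (if A ∩ Ek = C then μ' A / N' else 0) := by
          intro A
          by_cases h : A ∩ Ek = C
          · have hA : A ≠ ∅ := by
              intro h0
              apply hC
              rw [← h, h0, Set.empty_inter]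
            rw [if_pos h, if_pos h, hmm A hA]
            ring
          · simp [h]
        rw [Finset.sum_congr rfl fun A _ => e A, ← Finset.mul_sum]
        congr 1
        rw [← hTswap C, Finset.sum_div]
        exact Finset.sum_congr rfl fun A _ => by split_ifs <;> simp
      rw [h1, h2, hmm C hC]
      field_simp
    -- the conflict term
    have hconf :
        (∑ A : Set V, ∑ B : Set V, if A ∩ B = ∅ then m A * ssf Ek pk B else 0)
          = pk * ((T ∅ - μ' ∅) / N') := by
      rw [Finset.sum_congr rfl fun A _ => sum_ssf_inner m (hproper (Fin.last k)) pk A ∅,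
        Finset.sum_add_distrib]
      have h2 : (∑ A : Set V, if A = ∅ then m A * (1 - pk) else 0) = 0 := by
        rw [Finset.sum_ite_eq' Finset.univ ∅ (fun A => m A * (1 - pk)),
          if_pos (Finset.mem_univ _), hm0, zero_mul]
      have h1 : (∑ A : Set V, if A ∩ Ek = ∅ then m A * pk else 0)
          = pk * ((T ∅ - μ' ∅) / N') := by
        have e : ∀ A : Set V, (if A ∩ Ek = ∅ then m A * pk else 0)
            = pk * ((if A ∩ Ek = ∅ then μ' A / N' else 0)
                - (if A = ∅ then μ' ∅ / N' else 0)) := by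
          intro A
          by_cases hA : A = ∅
          · subst hA
            rw [if_pos (Set.empty_inter Ek), if_pos (Set.empty_inter Ek), if_pos rfl,
              hm0, zero_mul]
            ring
          · rw [if_neg hA]
            by_cases h : A ∩ Ek = ∅
            · rw [if_pos h, if_pos h, hmm A hA]
              ring
            · rw [if_neg h, if_neg h]
              ring
        rw [Finset.sum_congr rfl fun A _ => e A, ← Finset.mul_sum]
        congr 1
        rw [Finset.sum_sub_distrib]
        have hb : (∑ A : Set V, if A = ∅ then μ' ∅ / N' else 0) = μ' ∅ / N' := by
          rw [Finset.sum_ite_eq' Finset.univ ∅ (fun _ => μ' ∅ / N'),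
            if_pos (Finset.mem_univ _)]
        have ha : (∑ A : Set V, if A ∩ Ek = ∅ then μ' A / N' else 0) = T ∅ / N' := by
          rw [← hTswap ∅, Finset.sum_div]
          exact Finset.sum_congr rfl fun A _ => by split_ifs <;> simp
        rw [ha, hb]
        ring
      rw [h1, h2, add_zero]
    -- put everything together
    have hmain : ∀ A : Set V, A ≠ ∅ →
        dempsterComb E p A =
          (∑ B : Finset (Fin (k+1)), if (⋂ i ∈ B, E i) = A then evidMass p B else 0) /
          (∑ B : Finset (Fin (k+1)), if (⋂ i ∈ B, E i) ≠ ∅ then evidMass p B else 0) := by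
      intro A hA
      rw [hfold]
      show (if A = ∅ then 0 else _) = _
      rw [if_neg hA, hnum A hA, hconf, hmusucc A, hNsucc]
      have hden : 1 - pk * ((T ∅ - μ' ∅) / N')
          = (N' - pk * T ∅ + pk * μ' ∅) / N' := by
        field_simp
        ring
      rw [hden, div_div_div_cancel_right₀]
      exact hN'ne
    refine ⟨?_, hmain⟩
    rw [hfold]
    show (if (∅ : Set V) = ∅ then (0:ℝ) else _) = 0
    rw [if_pos rfl]

/-- under Dempster combinability, the combination
`m = m₁ ⊕ ⋯ ⊕ m_k` of the simple support functions of a quantitative evidence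
set has, for every nonempty `A ⊆ S`, the closed form
`m(A) = (∑_{B : ⋂B = A} δ(B)) / (∑_{B : ⋂B ≠ ∅} δ(B))` (with `⋂∅ = S`). -/
theorem dempsterComb_closed_form {V : Type*} [Fintype V] [Nonempty V] {k : ℕ}
    (E : Fin k → Set V) (hinj : Function.Injective E)
    (hne : ∀ i, (E i).Nonempty) (hproper : ∀ i, E i ≠ Set.univ)
    (p : Fin k → ℝ) (hp : ∀ i, p i ∈ Set.Ioo (0 : ℝ) 1)
    (hcomb : ∑ B : Finset (Fin k),
      (if (⋂ i ∈ B, E i) = ∅ then evidMass p B else 0) < 1) :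
    ∀ A : Set V, A ≠ ∅ →
      dempsterComb E p A =
        (∑ B : Finset (Fin k), if (⋂ i ∈ B, E i) = A then evidMass p B else 0) /
        (∑ B : Finset (Fin k), if (⋂ i ∈ B, E i) ≠ ∅ then evidMass p B else 0) := by
  exact (dempsterComb_key k E p hproper hp).2
end
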